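/- Let d ≥ 1 and n ≥ 1 be integers and let Ψ = (ψ_i)_{i≥1} be a sequence of reals with 0 < ψ_i < 1 for all i. If 𝔰 and 𝔯 are two distinct elements of S_n, then the closed cubes Q̄(P^n_Ψ(𝔰), ℓ^n_Ψ) and Q̄(P^n_Ψ(𝔯), ℓ^n_Ψ) are disjoint. -/

import Mathlib

open MeasureTheory Set Filter
open scoped ENNReal NNReal

noncomputable section

/-- The closed cube of side `l` centered at `c` in `ℝ^d`. -/
def cubeC (d : ℕ) (c : EuclideanSpace ℝ (Fin d)) (l : ℝ) : Set (EuclideanSpace ℝ (Fin d)) :=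
  {x | ∀ j, |x j - c j| ≤ l / 2}

/-- The open cube of side `l` centered at `c` in `ℝ^d`. -/
def cubeO (d : ℕ) (c : EuclideanSpace ℝ (Fin d)) (l : ℝ) : Set (EuclideanSpace ℝ (Fin d)) :=
  {x | ∀ j, |x j - c j| < l / 2}

/-- A finite string `(s_1, …, s_n)` of elements of `{−1,1}^d`, encoded as a real-valued
function all of whose values are `±1`. -/
def IsSignStr {d n : ℕ} (s : Fin n → Fin d → ℝ) : Prop := ∀ i j, s i j = 1 ∨ s i j = -1

/-- An infinite sequence `(s_1, s_2, …)` of elements of `{−1,1}^d` (the set `𝒮`). -/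
def IsSignSeq {d : ℕ} (s : ℕ → Fin d → ℝ) : Prop := ∀ i j, s i j = 1 ∨ s i j = -1

/-- `ℓ^n_Ψ = (∏_{i=1}^n ψ_i)/2^n`; here `Ψ i` stands for `ψ_{i+1}`. -/
def ell (Ψ : ℕ → ℝ) (n : ℕ) : ℝ := (∏ i ∈ Finset.range n, Ψ i) / 2 ^ n

/-- `P^n_Ψ(𝔰)`, with coordinates `1/2 + (1/4) ∑_{i=1}^n s_i^j ℓ^{i−1}_Ψ`. -/
def Pfin (d : ℕ) (Ψ : ℕ → ℝ) {n : ℕ} (s : Fin n → Fin d → ℝ) : EuclideanSpace ℝ (Fin d) :=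
  WithLp.toLp 2 (fun j => 1 / 2 + (1 / 4) * ∑ i, s i j * ell Ψ i)

/-- `𝒫_Ψ(𝔰)`, with coordinates `1/2 + (1/4) ∑_{i=1}^∞ s_i^j ℓ^{i−1}_Ψ`. -/
def Pinf (d : ℕ) (Ψ : ℕ → ℝ) (s : ℕ → Fin d → ℝ) : EuclideanSpace ℝ (Fin d) :=
  WithLp.toLp 2 (fun j => 1 / 2 + (1 / 4) * ∑' i, s i j * ell Ψ i)

/-- The constant sequence `Θ` of `1`s. -/
def Theta : ℕ → ℝ := fun _ => 1

/-- The constant sequence `Φ` with `ψ_i = 2^{−ν}`. -/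
def Phi (ν : ℝ) : ℕ → ℝ := fun _ => (2 : ℝ) ^ (-ν)

/-- `P̃^{n+1}_Ψ(𝔰) = P^{n+1}_Ψ(𝔰) − P^n_Ψ(𝔰′) + P^n_Θ(𝔰′)` (for `n = 0` this is `P^1_Ψ`). -/
def Ptilde (d : ℕ) (Ψ : ℕ → ℝ) {n : ℕ} (s : Fin (n + 1) → Fin d → ℝ) :
    EuclideanSpace ℝ (Fin d) :=
  Pfin d Ψ s - Pfin d Ψ (fun i : Fin n => s i.castSucc) +
    Pfin d Theta (fun i : Fin n => s i.castSucc)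

/-- The Cantor set `𝒞_Ψ = ⋂_{n≥1} ⋃_{𝔰 ∈ S_n} Q̄(P^n_Ψ(𝔰), ℓ^n_Ψ)`. -/
def CantorSet (d : ℕ) (Ψ : ℕ → ℝ) : Set (EuclideanSpace ℝ (Fin d)) :=
  ⋂ n : ℕ, ⋃ (s : Fin (n + 1) → Fin d → ℝ) (_ : IsSignStr s),
    cubeC d (Pfin d Ψ s) (ell Ψ (n + 1))

/-- The closed unit cube `[0,1]^d`. -/
def unitCubeIcc (d : ℕ) : Set (EuclideanSpace ℝ (Fin d)) := {x | ∀ j, x j ∈ Icc (0 : ℝ) 1}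

/-- The half-open unit cube `[0,1)^d`. -/
def unitCubeIco (d : ℕ) : Set (EuclideanSpace ℝ (Fin d)) := {x | ∀ j, x j ∈ Ico (0 : ℝ) 1}

/-- The open unit cube `(0,1)^d`. -/
def unitCubeIoo (d : ℕ) : Set (EuclideanSpace ℝ (Fin d)) := {x | ∀ j, x j ∈ Ioo (0 : ℝ) 1}

/-- `τ_i = (1 − 2^{−(1−β)i})/(2^{1−β} − 1)`. -/
def tau (β : ℝ) (i : ℕ) : ℝ := (1 - (2 : ℝ) ^ (-((1 - β) * i))) / ((2 : ℝ) ^ (1 - β) - 1)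

/-- `τ_∞ = 1/(2^{1−β} − 1)`. -/
def tauInf (β : ℝ) : ℝ := ((2 : ℝ) ^ (1 - β) - 1)⁻¹

/-- `γ` is a trajectory of the (time-dependent) vector field `u` on `[0,T]` starting at `x`:
`γ 0 = x` and `γ′(t) = u(t, γ(t))` for all `t ∈ [0,T]` (one-sided at the endpoints). -/
def IsTrajectoryOn (d : ℕ) (u : ℝ → EuclideanSpace ℝ (Fin d) → EuclideanSpace ℝ (Fin d))
    (T : ℝ) (x : EuclideanSpace ℝ (Fin d)) (γ : ℝ → EuclideanSpace ℝ (Fin d)) : Prop :=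
  γ 0 = x ∧ ∀ t ∈ Icc 0 T, HasDerivWithinAt γ (u t (γ t)) (Icc 0 T) t

/-- The integer lattice vector `k ∈ ℤ^d` viewed as a point of `ℝ^d`. -/
def intVec (d : ℕ) (k : Fin d → ℤ) : EuclideanSpace ℝ (Fin d) := WithLp.toLp 2 (fun i => (k i : ℝ))

/-!
Cubes of side `ℓ_n = ℓ^n_Ψ` are disjoint once their centres are more than `ℓ_n` apart in one
coordinate. In a coordinate `j` where `𝔰` and `𝔯` differ, the centres differ by
`(1/4) ∑_{k<n} (s_k^j - r_k^j) ℓ_k` (indices from `0`, as in `ell`), and this exceeds `ℓ_n` in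
absolute value by induction on `n`: a common first letter only rescales the sum by `ψ_1/2`
(shifting `Ψ`), while a differing first letter contributes `±2`, which dominates the rest because
`ψ_k < 1` gives `∑_{1≤k≤n} ℓ_k + 2 ℓ_{n+1} < 1`.
-/

lemma ell_zero (Ψ : ℕ → ℝ) : ell Ψ 0 = 1 := by
  simp [ell]

lemma ell_succ (Ψ : ℕ → ℝ) (k : ℕ) : ell Ψ (k + 1) = ell Ψ k * (Ψ k / 2) := by
  rw [ell, ell, Finset.prod_range_succ, pow_succ]
  ring

lemma ell_succ_eq_mul_ell_tail (Ψ : ℕ → ℝ) (k : ℕ) :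
    ell Ψ (k + 1) = Ψ 0 / 2 * ell (fun i => Ψ (i + 1)) k := by
  rw [ell, ell, Finset.prod_range_succ', pow_succ']
  ring

lemma ell_pos {Ψ : ℕ → ℝ} (hΨ : ∀ i, 0 < Ψ i) (k : ℕ) : 0 < ell Ψ k :=
  div_pos (Finset.prod_pos fun i _ => hΨ i) (by positivity)

lemma sum_range_ell_succ_add_two_mul_ell_succ_lt_one {Ψ : ℕ → ℝ} (hΨ : ∀ i, Ψ i ∈ Ioo (0 : ℝ) 1)
    (n : ℕ) : ∑ k ∈ Finset.range n, ell Ψ (k + 1) + 2 * ell Ψ (n + 1) < 1 := by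
  induction n with
  | zero =>
    have := (hΨ 0).2
    simp only [Finset.range_zero, Finset.sum_empty, zero_add, ell_succ, ell_zero]
    linarith
  | succ n ih =>
    have hℓ := ell_pos (fun i => (hΨ i).1) (n + 1)
    have hψ := (hΨ (n + 1)).2
    rw [Finset.sum_range_succ, ell_succ Ψ (n + 1)]
    nlinarith

lemma abs_sub_le_two_of_sign {a b : ℝ} (ha : a = 1 ∨ a = -1) (hb : b = 1 ∨ b = -1) :
    |a - b| ≤ 2 := by
  rcases ha with rfl | rfl <;> rcases hb with rfl | rfl <;> norm_num

lemma abs_sub_eq_two_of_sign {a b : ℝ} (ha : a = 1 ∨ a = -1) (hb : b = 1 ∨ b = -1)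
    (hab : a ≠ b) : |a - b| = 2 := by
  rcases ha with rfl | rfl <;> rcases hb with rfl | rfl <;> first | exact absurd rfl hab | norm_num

lemma abs_sum_sub_mul_ell_succ_le {n : ℕ} {Ψ : ℕ → ℝ} (hΨ : ∀ i, 0 < Ψ i) {a b : Fin n → ℝ}
    (ha : ∀ i, a i = 1 ∨ a i = -1) (hb : ∀ i, b i = 1 ∨ b i = -1) :
    |∑ i, (a i - b i) * ell Ψ (i + 1)| ≤ 2 * ∑ k ∈ Finset.range n, ell Ψ (k + 1) := by
  rw [Finset.mul_sum, ← Fin.sum_univ_eq_sum_range (fun k => 2 * ell Ψ (k + 1))]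
  refine (Finset.abs_sum_le_sum_abs _ _).trans (Finset.sum_le_sum fun i _ => ?_)
  rw [abs_mul, abs_of_pos (ell_pos hΨ _)]
  exact mul_le_mul_of_nonneg_right (abs_sub_le_two_of_sign (ha i) (hb i)) (ell_pos hΨ _).le

theorem four_mul_ell_lt_abs_sum_sub_mul_ell {n : ℕ} {Ψ : ℕ → ℝ} (hΨ : ∀ i, Ψ i ∈ Ioo (0 : ℝ) 1)
    {a b : Fin n → ℝ} (ha : ∀ i, a i = 1 ∨ a i = -1) (hb : ∀ i, b i = 1 ∨ b i = -1)
    (hab : a ≠ b) : 4 * ell Ψ n < |∑ i, (a i - b i) * ell Ψ i| := by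
  induction n generalizing Ψ with
  | zero => exact absurd (Subsingleton.elim a b) hab
  | succ n ih =>
    simp only [Fin.sum_univ_succ, Fin.val_zero, Fin.val_succ, ell_zero, mul_one]
    by_cases h0 : a 0 = b 0
    · have htail : Fin.tail a ≠ Fin.tail b := fun h => hab (by
        rw [← Fin.cons_self_tail a, ← Fin.cons_self_tail b, h0, h])
      have htail_gap := ih (fun i => hΨ (i + 1)) (fun i => ha i.succ) (fun i => hb i.succ) htail
      have hscale : ∑ i : Fin n, (a i.succ - b i.succ) * ell Ψ (i + 1) =
          Ψ 0 / 2 * ∑ i : Fin n, (a i.succ - b i.succ) * ell (fun k => Ψ (k + 1)) i := by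
        rw [Finset.mul_sum]
        exact Finset.sum_congr rfl fun i _ => by rw [ell_succ_eq_mul_ell_tail]; ring
      have hψ : 0 < Ψ 0 / 2 := half_pos (hΨ 0).1
      rw [h0, sub_self, zero_add, hscale, abs_mul, abs_of_pos hψ, ell_succ_eq_mul_ell_tail]
      linarith [mul_lt_mul_of_pos_left htail_gap hψ]
    · have hfirst := abs_sub_eq_two_of_sign (ha 0) (hb 0) h0
      have hrest := abs_sum_sub_mul_ell_succ_le (fun i => (hΨ i).1)
        (fun i => ha i.succ) (fun i => hb i.succ)
      have hsmall := sum_range_ell_succ_add_two_mul_ell_succ_lt_one hΨ n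
      have htri := abs_sub_abs_le_abs_add (a 0 - b 0)
        (∑ i : Fin n, (a i.succ - b i.succ) * ell Ψ (i + 1))
      linarith

lemma Pfin_sub_Pfin_apply (d : ℕ) (Ψ : ℕ → ℝ) {n : ℕ} (s r : Fin n → Fin d → ℝ) (j : Fin d) :
    Pfin d Ψ s j - Pfin d Ψ r j = 1 / 4 * ∑ i, (s i j - r i j) * ell Ψ i := by
  simp only [Pfin, PiLp.toLp_apply, sub_mul, Finset.sum_sub_distrib]
  ring

lemma disjoint_cubeC_of_lt_abs_sub {d : ℕ} {c c' : EuclideanSpace ℝ (Fin d)} {l : ℝ} (j : Fin d)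
    (h : l < |c j - c' j|) : Disjoint (cubeC d c l) (cubeC d c' l) := by
  refine Set.disjoint_left.mpr fun x hx hx' => ?_
  have hxc : |x j - c j| ≤ l / 2 := hx j
  have hxc' : |x j - c' j| ≤ l / 2 := hx' j
  have htri := abs_sub_le (c j) (x j) (c' j)
  rw [abs_sub_comm (c j) (x j)] at htri
  linarith

theorem statement4_general (d n : ℕ)
    (Ψ : ℕ → ℝ) (hΨ : ∀ i, Ψ i ∈ Ioo (0 : ℝ) 1)
    (s r : Fin n → Fin d → ℝ) (hs : IsSignStr s) (hr : IsSignStr r) (hsr : s ≠ r) :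
    Disjoint (cubeC d (Pfin d Ψ s) (ell Ψ n)) (cubeC d (Pfin d Ψ r) (ell Ψ n)) := by
  obtain ⟨i, hi⟩ := Function.ne_iff.mp hsr
  obtain ⟨j, hj⟩ := Function.ne_iff.mp hi
  have hcol : (fun i => s i j) ≠ (fun i => r i j) := fun h => hj (congr_fun h i)
  have hgap := four_mul_ell_lt_abs_sum_sub_mul_ell hΨ (fun i => hs i j) (fun i => hr i j) hcol
  refine disjoint_cubeC_of_lt_abs_sub j ?_
  rw [Pfin_sub_Pfin_apply, abs_mul, abs_of_pos (by norm_num : (0 : ℝ) < 1 / 4)]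
  linarith

/-- Lemma 2.1: for a sequence `Ψ` with `0 < ψ_i < 1`, distinct strings
`𝔰 ≠ 𝔯` in `S_n` give disjoint closed cubes `Q̄(P^n_Ψ(𝔰), ℓ^n_Ψ)` and `Q̄(P^n_Ψ(𝔯), ℓ^n_Ψ)`. -/
theorem statement4 (d n : ℕ) (hd : 1 ≤ d) (hn : 1 ≤ n)
    (Ψ : ℕ → ℝ) (hΨ : ∀ i, Ψ i ∈ Ioo (0 : ℝ) 1)
    (s r : Fin n → Fin d → ℝ) (hs : IsSignStr s) (hr : IsSignStr r) (hsr : s ≠ r) :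
    Disjoint (cubeC d (Pfin d Ψ s) (ell Ψ n)) (cubeC d (Pfin d Ψ r) (ell Ψ n)) :=
  statement4_general d n Ψ hΨ s r hs hr hsr

end
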